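/- arXiv:2512.24371 — 2 statements merged into one kernel-verified Lean document; each statement's English description precedes it below -/
import Mathlib

section
/- The greatest convex minorant on [0,∞) of the short-call payoff h(x) = −(x−K)₊ is the function h*(x) = −x; that is, x ↦ −x is convex, satisfies −x ≤ −(x−K)₊ for all x ≥ 0, and any convex function g on [0,∞) with g(x) ≤ −(x−K)₊ for all x ≥ 0 satisfies g(x) ≤ −x for all x ≥ 0. -/
open Filter Topology

/-- The secant slopes of `g` from `a` are nondecreasing and eventually at most `m + O(1/t)`. -/
theorem ConvexOn.le_add_mul_sub_of_eventually_le {g : ℝ → ℝ} {a c m : ℝ}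
    (hg : ConvexOn ℝ (Set.Ici a) g) (hle : ∀ᶠ t in atTop, g t ≤ c + m * t) {x : ℝ}
    (hx : a ≤ x) : g x ≤ g a + m * (x - a) := by
  rcases hx.eq_or_lt with rfl | hax
  · simp
  have hslope : (g x - g a) / (x - a) ≤ m := by
    have hlim : Tendsto (fun t => m + (c + m * a - g a) / (t - a)) atTop (𝓝 m) := by
      simpa [sub_eq_add_neg] using tendsto_const_nhds.add
        (tendsto_const_nhds.div_atTop (tendsto_atTop_add_const_right _ (-a) tendsto_id))
    refine ge_of_tendsto hlim ?_
    filter_upwards [hle, eventually_gt_atTop x] with t hgt hxt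
    have hat : 0 < t - a := by linarith
    calc (g x - g a) / (x - a)
        ≤ (g t - g a) / (t - a) :=
          hg.secant_mono Set.self_mem_Ici hax.le (by simp only [Set.mem_Ici]; linarith)
            hax.ne' (sub_pos.1 hat).ne' hxt.le
      _ ≤ (c + m * t - g a) / (t - a) := by gcongr
      _ = m + (c + m * a - g a) / (t - a) := by field_simp; ring
  linarith [(div_le_iff₀ (sub_pos.2 hax)).1 hslope]

/-- The greatest convex minorant on [0,∞) of the short-call payoff h(x) = −(x−K)₊
is h*(x) = −x: x ↦ −x is convex, lies below h on [0,∞), and any convex minorant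
g of h on [0,∞) satisfies g(x) ≤ −x there. -/
theorem short_call_convex_minorant (K : ℝ) (hK : 0 ≤ K) :
    ConvexOn ℝ (Set.Ici (0 : ℝ)) (fun x => -x) ∧
    (∀ x : ℝ, 0 ≤ x → -x ≤ -max (x - K) 0) ∧
    ∀ g : ℝ → ℝ, ConvexOn ℝ (Set.Ici (0 : ℝ)) g →
      (∀ x : ℝ, 0 ≤ x → g x ≤ -max (x - K) 0) →
      ∀ x : ℝ, 0 ≤ x → g x ≤ -x := by
  refine ⟨(concaveOn_id (convex_Ici 0)).neg, fun x hx => ?_, fun g hg hgh x hx => ?_⟩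
  · linarith [max_le (by linarith : x - K ≤ x) hx]
  have hg0 : g 0 ≤ 0 := (hgh 0 le_rfl).trans (neg_nonpos.2 (le_max_right _ _))
  have hgK : ∀ᶠ t in atTop, g t ≤ K + -1 * t := by
    filter_upwards [eventually_ge_atTop 0] with t ht
    linarith [hgh t ht, le_max_left (t - K) 0]
  linarith [hg.le_add_mul_sub_of_eventually_le hgK hx]
end

section
/- Monotonicity in M of the budget equation: the function F(M) = M + ∫_0^{r*(M)} γ(u)·(z(u) − M) du, where z is continuous strictly decreasing, γ ≥ 0 integrable, and r*(M) = inf{u ∈ [0,T] : z(u) < M} ∧ T, is continuous and strictly increasing in M; consequently for any target w with F(inf) ≤ w, the equation F(M) = w has a unique solution. -/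
/-!
Write `F M = M + Φ M` with `Φ M = ∫ γ u * max (z u - M) 0`. Since `M ↦ max (z u - M) 0` is
1-Lipschitz and `γ ≥ 0`, `Φ` is Lipschitz with constant `G = ∫ γ < 1`. Hence `F` is continuous and
`F b - F a ≥ (1 - G) (b - a)` for `a ≤ b`; such a continuous function is strictly increasing and
tends to `±∞` at `±∞`, so it is a bijection of `ℝ`.
-/

open MeasureTheory Filter

section Expanding

variable {f : ℝ → ℝ} {c : ℝ}

theorem strictMono_of_mul_sub_le_sub (hc : 0 < c)
    (hf : ∀ a b, a ≤ b → c * (b - a) ≤ f b - f a) : StrictMono f := fun a b hab => by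
  nlinarith [hf a b hab.le]

theorem surjective_of_mul_sub_le_sub (hcont : Continuous f) (hc : 0 < c)
    (hf : ∀ a b, a ≤ b → c * (b - a) ≤ f b - f a) : Function.Surjective f := by
  refine hcont.surjective ?_ ?_
  · refine tendsto_atTop_mono' atTop ?_
      (tendsto_atTop_add_const_left _ (f 0) (tendsto_id.const_mul_atTop hc))
    filter_upwards [eventually_ge_atTop 0] with b hb
    have := hf 0 b hb
    simp only [id_eq]
    linarith
  · refine tendsto_atBot_mono' atBot ?_
      (tendsto_atBot_add_const_left _ (f 0) (tendsto_id.const_mul_atBot hc))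
    filter_upwards [eventually_le_atBot 0] with a ha
    have := hf a 0 ha
    simp only [id_eq]
    linarith

end Expanding

section ExcessIntegral

variable {α : Type*} [MeasurableSpace α] {μ : Measure α} {γ z : α → ℝ}

theorem abs_integral_mul_max_sub_sub_le (hγ : ∀ u, 0 ≤ γ u) (hγint : Integrable γ μ)
    (hint : ∀ M, Integrable (fun u => γ u * max (z u - M) 0) μ) (a b : ℝ) :
    |(∫ u, γ u * max (z u - b) 0 ∂μ) - ∫ u, γ u * max (z u - a) 0 ∂μ|
      ≤ (∫ u, γ u ∂μ) * |b - a| := by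
  have hpointwise : ∀ u, ‖γ u * max (z u - b) 0 - γ u * max (z u - a) 0‖ ≤ γ u * |b - a| := by
    intro u
    rw [Real.norm_eq_abs, ← mul_sub, abs_mul, abs_of_nonneg (hγ u)]
    refine mul_le_mul_of_nonneg_left ?_ (hγ u)
    calc |max (z u - b) 0 - max (z u - a) 0| ≤ |(z u - b) - (z u - a)| :=
          abs_max_sub_max_le_abs _ _ _
      _ = |b - a| := by rw [abs_sub_comm]; ring_nf
  rw [← integral_sub (hint b) (hint a), ← integral_mul_const, ← Real.norm_eq_abs]
  exact norm_integral_le_of_norm_le (hγint.mul_const _) (.of_forall hpointwise)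

end ExcessIntegral

theorem budget_equation_strict_mono_general
    (T : ℝ) (z γ : ℝ → ℝ)
    (hz : Continuous z)
    (hγ : ∀ u, 0 ≤ γ u) (hγint : IntegrableOn γ (Set.Icc 0 T))
    (hγlt : (∫ u in Set.Icc (0 : ℝ) T, γ u) < 1) :
    let F : ℝ → ℝ := fun M => M + ∫ u in Set.Icc (0 : ℝ) T, γ u * max (z u - M) 0
    Continuous F ∧ StrictMono F ∧ ∀ w : ℝ, ∃! M : ℝ, F M = w := by
  intro F
  set G := ∫ u in Set.Icc (0 : ℝ) T, γ u
  have hint (M : ℝ) : IntegrableOn (fun u => γ u * max (z u - M) 0) (Set.Icc 0 T) :=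
    hγint.mul_continuousOn (by fun_prop) isCompact_Icc
  have hlip := abs_integral_mul_max_sub_sub_le hγ hγint hint
  have hexpand (a b : ℝ) (hab : a ≤ b) : (1 - G) * (b - a) ≤ F b - F a := by
    have := (abs_le.mp (hlip a b)).1
    rw [abs_of_nonneg (sub_nonneg.mpr hab)] at this
    simp only [F]
    linarith
  have hcont : Continuous F :=
    continuous_id.add (LipschitzWith.of_dist_le' fun a b => by
      simpa only [Real.dist_eq, abs_sub_comm b a] using hlip b a).continuous
  have hmono := strictMono_of_mul_sub_le_sub (sub_pos.mpr hγlt) hexpand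
  have hsurj := surjective_of_mul_sub_le_sub hcont (sub_pos.mpr hγlt) hexpand
  exact ⟨hcont, hmono, Function.Bijective.existsUnique ⟨hmono.injective, hsurj⟩⟩

/-- Monotonicity in `M` of the budget equation: with `z` continuous strictly
decreasing on `[0,T]`, `γ ≥ 0` integrable with `∫_0^T γ < 1`, the function
`F(M) = M + ∫_0^T γ(u)·max(z(u) − M, 0) du` (equal to
`M + ∫_0^{r*(M)} γ(u)(z(u) − M) du`) is continuous and strictly increasing,
hence `F(M) = w` has a unique solution for every target `w`. -/
theorem budget_equation_strict_mono
    (T : ℝ) (hT : 0 < T) (z γ : ℝ → ℝ)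
    (hz : Continuous z) (hza : StrictAntiOn z (Set.Icc 0 T))
    (hγ : ∀ u, 0 ≤ γ u) (hγint : IntegrableOn γ (Set.Icc 0 T))
    (hγlt : (∫ u in Set.Icc (0 : ℝ) T, γ u) < 1) :
    let F : ℝ → ℝ := fun M => M + ∫ u in Set.Icc (0 : ℝ) T, γ u * max (z u - M) 0
    Continuous F ∧ StrictMono F ∧ ∀ w : ℝ, ∃! M : ℝ, F M = w :=
  budget_equation_strict_mono_general T z γ hz hγ hγint hγlt
end
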